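/- Let E be a monotonically complete Banach lattice with the Fatou property and (T_i)_{i∈I} a mutually commuting family of positive linear contractions on E. Then the common fixed space F, equipped with the order and norm inherited from E and with its own lattice operations, is itself monotonically complete and has the Fatou property; in particular F is Dedekind complete. -/

import Mathlib

/-!
A positive element `y` with `y ≤ T i y` for all `i` lies below a least common fixed point, of
norm at most `‖y‖`: by Zorn's lemma take a maximal `m ≥ y` among the elements `z` with
`‖z‖ ≤ ‖y‖`, `z ≤ T i z` for all `i`, and `z` below every fixed point above `y` (monotone
completeness and the Fatou property bound chains). This set is invariant under each `T i`,
so maximality forces `T i m = m`. Applied to the supremum in `E` of a directed family of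
fixed points this gives monotone completeness and the Fatou property of `F`; Dedekind
completeness follows by taking the supremum in `F` of the fixed points lying between a fixed
element of the family and all its fixed upper bounds.
-/

def IsMonotonicallyComplete (E : Type*) [Norm E] [Preorder E] [Zero E] : Prop :=
  ∀ D : Set E, D.Nonempty → DirectedOn (· ≤ ·) D → (∀ x ∈ D, 0 ≤ x) →
    (∃ C : ℝ, ∀ x ∈ D, ‖x‖ ≤ C) → ∃ b : E, IsLUB D b

def HasFatouProperty (E : Type*) [Norm E] [Preorder E] [Zero E] : Prop :=
  ∀ (D : Set E) (b : E), D.Nonempty → DirectedOn (· ≤ ·) D →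
    (∀ x ∈ D, 0 ≤ x) → IsLUB D b → ‖b‖ = ⨆ x : D, ‖(x : E)‖

theorem norm_le_norm_of_nonneg_of_le {E : Type*} [NormedAddCommGroup E] [Lattice E]
    [HasSolidNorm E] [IsOrderedAddMonoid E] {a b : E} (ha : 0 ≤ a) (hab : a ≤ b) :
    ‖a‖ ≤ ‖b‖ :=
  norm_le_norm_of_abs_le_abs <| by rwa [abs_of_nonneg ha, abs_of_nonneg (ha.trans hab)]

section Order

variable {E : Type*} [NormedAddCommGroup E] [PartialOrder E] [IsOrderedAddMonoid E]
  [NormedSpace ℝ E] {I : Type*} {T : I → E →L[ℝ] E}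

theorem exists_isLeast_fixed_ge (hmc : IsMonotonicallyComplete E) (hfatou : HasFatouProperty E)
    (hpos : ∀ i, ∀ x : E, 0 ≤ x → 0 ≤ T i x) (hcontr : ∀ i, ‖T i‖ ≤ 1)
    (hcomm : ∀ i j, (T i).comp (T j) = (T j).comp (T i))
    {y : E} (hy₀ : 0 ≤ y) (hy : ∀ i, y ≤ T i y) :
    ∃ m, IsLeast {h | (∀ i, T i h = h) ∧ y ≤ h} m ∧ ‖m‖ ≤ ‖y‖ := by
  have hmono i : Monotone (T i) := (monotone_iff_map_nonneg (T i)).2 (hpos i)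
  set P : Set E := {z | y ≤ z ∧ ‖z‖ ≤ ‖y‖ ∧ (∀ i, z ≤ T i z) ∧
    ∀ h, (∀ i, T i h = h) → y ≤ h → z ≤ h}
  have chain_bdd : ∀ c ⊆ P, IsChain (· ≤ ·) c → ∀ z ∈ c, ∃ s ∈ P, ∀ w ∈ c, w ≤ s := by
    intro c hcP hc z hz
    have hc₀ : ∀ w ∈ c, 0 ≤ w := fun w hw => hy₀.trans (hcP hw).1
    obtain ⟨s, hs⟩ := hmc c ⟨z, hz⟩ hc.directedOn hc₀ ⟨‖y‖, fun w hw => (hcP hw).2.1⟩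
    refine ⟨s, ⟨(hcP hz).1.trans (hs.1 hz), ?_, fun i => ?_, fun h hh hyh => ?_⟩, hs.1⟩
    · rw [hfatou c s ⟨z, hz⟩ hc.directedOn hc₀ hs]
      exact Real.iSup_le (fun w => (hcP w.2).2.1) (norm_nonneg _)
    · exact hs.2 fun w hw => ((hcP hw).2.2.1 i).trans (hmono i (hs.1 hw))
    · exact hs.2 fun w hw => (hcP hw).2.2.2 h hh hyh
  have map_mem : ∀ i, ∀ z ∈ P, T i z ∈ P := by
    rintro i z ⟨hyz, hzy, hz, hzh⟩
    refine ⟨hyz.trans (hz i), ?_, fun j => ?_, fun h hh hyh => ?_⟩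
    · calc ‖T i z‖ ≤ ‖T i‖ * ‖z‖ := (T i).le_opNorm z
        _ ≤ 1 * ‖y‖ := mul_le_mul (hcontr i) hzy (norm_nonneg _) zero_le_one
        _ = ‖y‖ := one_mul _
    · calc T i z ≤ T i (T j z) := hmono i (hz j)
        _ = T j (T i z) := DFunLike.congr_fun (hcomm i j) z
    · exact hh i ▸ hmono i (hzh h hh hyh)
  obtain ⟨m, -, hmP, hmax⟩ := zorn_le_nonempty₀ P chain_bdd y
    ⟨le_rfl, le_rfl, hy, fun _ _ hyh => hyh⟩
  have hfix i : T i m = m := le_antisymm (hmax (map_mem i m hmP) (hmP.2.2.1 i)) (hmP.2.2.1 i)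
  exact ⟨m, ⟨⟨hfix, hmP.1⟩, fun h hh => hmP.2.2.2 h hh.1 hh.2⟩, hmP.2.1⟩

theorem exists_isLeast_fixed_ge_of_fixed_le (hmc : IsMonotonicallyComplete E)
    (hfatou : HasFatouProperty E) (hpos : ∀ i, ∀ x : E, 0 ≤ x → 0 ≤ T i x)
    (hcontr : ∀ i, ‖T i‖ ≤ 1) (hcomm : ∀ i j, (T i).comp (T j) = (T j).comp (T i))
    {f y : E} (hf : ∀ i, T i f = f) (hfy : f ≤ y) (hy : ∀ i, y ≤ T i y) :
    ∃ m, IsLeast {h | (∀ i, T i h = h) ∧ y ≤ h} m := by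
  have hy' i : y - f ≤ T i (y - f) := by
    rw [map_sub, hf i]
    exact sub_le_sub_right (hy i) f
  obtain ⟨m, ⟨⟨hm, hym⟩, hmin⟩, -⟩ :=
    exists_isLeast_fixed_ge hmc hfatou hpos hcontr hcomm (sub_nonneg.2 hfy) hy'
  refine ⟨m + f, ⟨fun i => by rw [map_add, hm i, hf i], sub_le_iff_le_add.1 hym⟩, ?_⟩
  rintro h ⟨hh, hyh⟩
  exact le_sub_iff_add_le.1 <| hmin ⟨fun i => by rw [map_sub, hh i, hf i], sub_le_sub_right hyh f⟩

theorem exists_isLeast_fixed_upperBounds (hmc : IsMonotonicallyComplete E)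
    (hfatou : HasFatouProperty E) (hpos : ∀ i, ∀ x : E, 0 ≤ x → 0 ≤ T i x)
    (hcontr : ∀ i, ‖T i‖ ≤ 1) (hcomm : ∀ i j, (T i).comp (T j) = (T j).comp (T i))
    {D : Set E} (hD : ∀ x ∈ D, ∀ i, T i x = x) (hne : D.Nonempty) (hdir : DirectedOn (· ≤ ·) D)
    (hD₀ : ∀ x ∈ D, 0 ≤ x) (hbdd : ∃ C : ℝ, ∀ x ∈ D, ‖x‖ ≤ C) :
    ∃ b, IsLeast {h | (∀ i, T i h = h) ∧ ∀ x ∈ D, x ≤ h} b ∧ ‖b‖ ≤ ⨆ x : D, ‖(x : E)‖ := by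
  obtain ⟨b₀, hb₀⟩ := hmc D hne hdir hD₀ hbdd
  obtain ⟨x₀, hx₀⟩ := hne
  have hb₀_le i : b₀ ≤ T i b₀ :=
    hb₀.2 fun x hx => hD x hx i ▸ (monotone_iff_map_nonneg (T i)).2 (hpos i) (hb₀.1 hx)
  obtain ⟨m, hm, hmb₀⟩ := exists_isLeast_fixed_ge hmc hfatou hpos hcontr hcomm
    ((hD₀ x₀ hx₀).trans (hb₀.1 hx₀)) hb₀_le
  have hfixed_ub :
      {h | (∀ i, T i h = h) ∧ ∀ x ∈ D, x ≤ h} = {h | (∀ i, T i h = h) ∧ b₀ ≤ h} := by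
    ext h
    simp only [Set.mem_ofPred_eq, isLUB_le_iff hb₀, mem_upperBounds]
  exact ⟨m, hfixed_ub ▸ hm, hfatou D b₀ ⟨x₀, hx₀⟩ hdir hD₀ hb₀ ▸ hmb₀⟩

end Order

section Lattice

variable {E : Type*} [NormedAddCommGroup E] [Lattice E] [IsOrderedAddMonoid E]
  [NormedSpace ℝ E] {I : Type*} {T : I → E →L[ℝ] E}

theorem exists_isLeast_fixed_sup (hmc : IsMonotonicallyComplete E)
    (hfatou : HasFatouProperty E) (hpos : ∀ i, ∀ x : E, 0 ≤ x → 0 ≤ T i x)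
    (hcontr : ∀ i, ‖T i‖ ≤ 1) (hcomm : ∀ i j, (T i).comp (T j) = (T j).comp (T i))
    {a b : E} (ha : ∀ i, T i a = a) (hb : ∀ i, T i b = b) :
    ∃ c, IsLeast {h | (∀ i, T i h = h) ∧ a ⊔ b ≤ h} c := by
  have hmono i : Monotone (T i) := (monotone_iff_map_nonneg (T i)).2 (hpos i)
  exact exists_isLeast_fixed_ge_of_fixed_le hmc hfatou hpos hcontr hcomm ha le_sup_left
    fun i => sup_le ((ha i).ge.trans (hmono i le_sup_left))
      ((hb i).ge.trans (hmono i le_sup_right))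

variable [HasSolidNorm E]

theorem norm_eq_iSup_of_isLeast_fixed_upperBounds (hmc : IsMonotonicallyComplete E)
    (hfatou : HasFatouProperty E) (hpos : ∀ i, ∀ x : E, 0 ≤ x → 0 ≤ T i x)
    (hcontr : ∀ i, ‖T i‖ ≤ 1) (hcomm : ∀ i j, (T i).comp (T j) = (T j).comp (T i))
    {D : Set E} {b : E} (hD : ∀ x ∈ D, ∀ i, T i x = x) (hne : D.Nonempty)
    (hdir : DirectedOn (· ≤ ·) D) (hD₀ : ∀ x ∈ D, 0 ≤ x)
    (hb : IsLeast {h | (∀ i, T i h = h) ∧ ∀ x ∈ D, x ≤ h} b) :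
    ‖b‖ = ⨆ x : D, ‖(x : E)‖ := by
  have hxb : ∀ x ∈ D, ‖x‖ ≤ ‖b‖ := fun x hx =>
    norm_le_norm_of_nonneg_of_le (hD₀ x hx) (hb.1.2 x hx)
  obtain ⟨c, hc, hcD⟩ :=
    exists_isLeast_fixed_upperBounds hmc hfatou hpos hcontr hcomm hD hne hdir hD₀ ⟨_, hxb⟩
  exact le_antisymm (hb.unique hc ▸ hcD) (Real.iSup_le (fun x => hxb x x.2) (norm_nonneg _))

theorem exists_isLeast_fixed_upperBounds_of_bddAbove (hmc : IsMonotonicallyComplete E)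
    (hfatou : HasFatouProperty E) (hpos : ∀ i, ∀ x : E, 0 ≤ x → 0 ≤ T i x)
    (hcontr : ∀ i, ‖T i‖ ≤ 1) (hcomm : ∀ i j, (T i).comp (T j) = (T j).comp (T i))
    {D : Set E} (hD : ∀ x ∈ D, ∀ i, T i x = x) (hne : D.Nonempty)
    (hbdd : ∃ u : E, (∀ i, T i u = u) ∧ ∀ x ∈ D, x ≤ u) :
    ∃ b, IsLeast {h | (∀ i, T i h = h) ∧ ∀ x ∈ D, x ≤ h} b := by
  obtain ⟨x₀, hx₀⟩ := hne
  obtain ⟨u, hu, hDu⟩ := hbdd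
  set U := {h | (∀ i, T i h = h) ∧ ∀ x ∈ D, x ≤ h}
  -- `S - x₀` is a bounded directed set of positive fixed points, and its least fixed upper bound
  -- plus `x₀` is the least fixed upper bound of `D`.
  set S := {z | (∀ i, T i z = z) ∧ x₀ ≤ z ∧ ∀ h ∈ U, z ≤ h}
  have exists_mem_ge : ∀ a b, (∀ i, T i a = a) → (∀ h ∈ U, a ≤ h) → b ∈ S →
      ∃ c ∈ S, a ≤ c ∧ b ≤ c := by
    rintro a b ha haU ⟨hb, hx₀b, hbU⟩
    obtain ⟨c, ⟨hc, habc⟩, hcmin⟩ := exists_isLeast_fixed_sup hmc hfatou hpos hcontr hcomm ha hb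
    refine ⟨c, ⟨hc, hx₀b.trans (le_sup_right.trans habc), fun h hh => ?_⟩,
      le_sup_left.trans habc, le_sup_right.trans habc⟩
    exact hcmin ⟨hh.1, sup_le (haU h hh) (hbU h hh)⟩
  have hx₀S : x₀ ∈ S := ⟨hD x₀ hx₀, le_rfl, fun h hh => hh.2 x₀ hx₀⟩
  obtain ⟨g, ⟨⟨hg, hWg⟩, hgmin⟩, -⟩ :=
    exists_isLeast_fixed_upperBounds (D := (· - x₀) '' S) hmc hfatou hpos hcontr hcomm
    (by rintro _ ⟨z, hz, rfl⟩ i; rw [map_sub, hz.1 i, hD x₀ hx₀ i])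
    ⟨x₀ - x₀, x₀, hx₀S, rfl⟩
    (by
      rintro _ ⟨z, hz, rfl⟩ _ ⟨z', hz', rfl⟩
      obtain ⟨c, hc, hzc, hz'c⟩ := exists_mem_ge z z' hz.1 hz.2.2 hz'
      exact ⟨c - x₀, ⟨c, hc, rfl⟩, sub_le_sub_right hzc x₀, sub_le_sub_right hz'c x₀⟩)
    (by rintro _ ⟨z, hz, rfl⟩; exact sub_nonneg.2 hz.2.1)
    ⟨‖u - x₀‖, by
      rintro _ ⟨z, hz, rfl⟩
      exact norm_le_norm_of_nonneg_of_le (sub_nonneg.2 hz.2.1)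
        (sub_le_sub_right (hz.2.2 u ⟨hu, hDu⟩) x₀)⟩
  refine ⟨g + x₀, ⟨fun i => by rw [map_add, hg i, hD x₀ hx₀ i], fun x hx => ?_⟩, ?_⟩
  · obtain ⟨c, hc, hxc, -⟩ := exists_mem_ge x x₀ (hD x hx) (fun h hh => hh.2 x hx) hx₀S
    exact hxc.trans (sub_le_iff_le_add.1 (hWg _ ⟨c, hc, rfl⟩))
  · rintro h hh
    refine le_sub_iff_add_le.1 (hgmin ⟨fun i => by rw [map_sub, hh.1 i, hD x₀ hx₀ i], ?_⟩)
    rintro _ ⟨z, hz, rfl⟩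
    exact sub_le_sub_right (hz.2.2 h hh) x₀

end Lattice

theorem fixed_space_monotonically_complete_and_fatou_general
    {E : Type*} [NormedAddCommGroup E] [Lattice E] [HasSolidNorm E] [IsOrderedAddMonoid E] [NormedSpace ℝ E]
    (hmc : ∀ D : Set E, D.Nonempty → DirectedOn (· ≤ ·) D → (∀ x ∈ D, 0 ≤ x) →
      (∃ C : ℝ, ∀ x ∈ D, ‖x‖ ≤ C) → ∃ b : E, IsLUB D b)
    (hfatou : ∀ (D : Set E) (b : E), D.Nonempty → DirectedOn (· ≤ ·) D →
      (∀ x ∈ D, 0 ≤ x) → IsLUB D b → ‖b‖ = ⨆ x : D, ‖(x : E)‖)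
    {I : Type*} (T : I → E →L[ℝ] E)
    (hpos : ∀ i, ∀ x : E, 0 ≤ x → 0 ≤ T i x) (hcontr : ∀ i, ‖T i‖ ≤ 1)
    (hcomm : ∀ i j, (T i).comp (T j) = (T j).comp (T i)) :
    -- `F` is monotonically complete:
    (∀ D : Set E, (∀ x ∈ D, ∀ i, T i x = x) → D.Nonempty → DirectedOn (· ≤ ·) D →
      (∀ x ∈ D, 0 ≤ x) → (∃ C : ℝ, ∀ x ∈ D, ‖x‖ ≤ C) →
      ∃ b : E, IsLeast {h : E | (∀ i, T i h = h) ∧ ∀ x ∈ D, x ≤ h} b) ∧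
    -- `F` has the Fatou property:
    (∀ (D : Set E) (b : E), (∀ x ∈ D, ∀ i, T i x = x) → D.Nonempty →
      DirectedOn (· ≤ ·) D → (∀ x ∈ D, 0 ≤ x) →
      IsLeast {h : E | (∀ i, T i h = h) ∧ ∀ x ∈ D, x ≤ h} b →
      ‖b‖ = ⨆ x : D, ‖(x : E)‖) ∧
    -- in particular, `F` is Dedekind complete:
    (∀ D : Set E, (∀ x ∈ D, ∀ i, T i x = x) → D.Nonempty →
      (∃ u : E, (∀ i, T i u = u) ∧ ∀ x ∈ D, x ≤ u) →
      ∃ b : E, IsLeast {h : E | (∀ i, T i h = h) ∧ ∀ x ∈ D, x ≤ h} b) :=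
  ⟨fun _ hD hne hdir hD₀ hbdd =>
      (exists_isLeast_fixed_upperBounds hmc hfatou hpos hcontr hcomm hD hne hdir hD₀ hbdd).imp
        fun _ h => h.1,
    fun _ _ hD hne hdir hD₀ hb =>
      norm_eq_iSup_of_isLeast_fixed_upperBounds hmc hfatou hpos hcontr hcomm hD hne hdir hD₀ hb,
    fun _ hD hne hbdd =>
      exists_isLeast_fixed_upperBounds_of_bddAbove hmc hfatou hpos hcontr hcomm hD hne hbdd⟩

/-- Main theorem, part (c): the common fixed space `F`, with the order and norm
inherited from `E`, is itself monotonically complete and has the Fatou property;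
in particular it is Dedekind complete.  (Suprema are taken within `F`, i.e. least
upper bounds among elements of `F`.) -/
theorem fixed_space_monotonically_complete_and_fatou
    {E : Type*} [NormedAddCommGroup E] [Lattice E] [HasSolidNorm E] [IsOrderedAddMonoid E] [NormedSpace ℝ E] [CompleteSpace E]
    (hmc : ∀ D : Set E, D.Nonempty → DirectedOn (· ≤ ·) D → (∀ x ∈ D, 0 ≤ x) →
      (∃ C : ℝ, ∀ x ∈ D, ‖x‖ ≤ C) → ∃ b : E, IsLUB D b)
    (hfatou : ∀ (D : Set E) (b : E), D.Nonempty → DirectedOn (· ≤ ·) D →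
      (∀ x ∈ D, 0 ≤ x) → IsLUB D b → ‖b‖ = ⨆ x : D, ‖(x : E)‖)
    {I : Type*} (T : I → E →L[ℝ] E)
    (hpos : ∀ i, ∀ x : E, 0 ≤ x → 0 ≤ T i x) (hcontr : ∀ i, ‖T i‖ ≤ 1)
    (hcomm : ∀ i j, (T i).comp (T j) = (T j).comp (T i)) :
    -- `F` is monotonically complete:
    (∀ D : Set E, (∀ x ∈ D, ∀ i, T i x = x) → D.Nonempty → DirectedOn (· ≤ ·) D →
      (∀ x ∈ D, 0 ≤ x) → (∃ C : ℝ, ∀ x ∈ D, ‖x‖ ≤ C) →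
      ∃ b : E, IsLeast {h : E | (∀ i, T i h = h) ∧ ∀ x ∈ D, x ≤ h} b) ∧
    -- `F` has the Fatou property:
    (∀ (D : Set E) (b : E), (∀ x ∈ D, ∀ i, T i x = x) → D.Nonempty →
      DirectedOn (· ≤ ·) D → (∀ x ∈ D, 0 ≤ x) →
      IsLeast {h : E | (∀ i, T i h = h) ∧ ∀ x ∈ D, x ≤ h} b →
      ‖b‖ = ⨆ x : D, ‖(x : E)‖) ∧
    -- in particular, `F` is Dedekind complete:
    (∀ D : Set E, (∀ x ∈ D, ∀ i, T i x = x) → D.Nonempty →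
      (∃ u : E, (∀ i, T i u = u) ∧ ∀ x ∈ D, x ≤ u) →
      ∃ b : E, IsLeast {h : E | (∀ i, T i h = h) ∧ ∀ x ∈ D, x ≤ h} b) :=
  fixed_space_monotonically_complete_and_fatou_general hmc hfatou T hpos hcontr hcomm
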